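/- arXiv:2309.03143 — 6 statements merged into one kernel-verified Lean document; each statement's English description precedes it below -/
import Mathlib

section
/- Let n be a positive integer, z_1, ..., z_n formal variables (elements of a field of rational functions), and τ any function of z_1. Then the sum over all cyclic permutations σ of {1,...,n} (permutations with a single cycle of length n) of the product 1/(z_{σ(1)} - τ(z_1)) · ∏_{i=2}^n 1/(z_i - z_{σ(i)}) equals (z_1 - τ(z_1))^{n-2} / ∏_{i=2}^n [(z_1 - z_i)(τ(z_1) - z_i)]. -/
/-!
A full cycle `σ` is determined by the order `σ x, σ² x, …` in which it visits the points other
than the base point `x`. With `a = z x` and `t = τ a`, the summand of `σ` is, up to sign, the chain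
product `(t - w₁)⁻¹ (w₁ - w₂)⁻¹ ⋯ (wₘ - a)⁻¹` along that ordering `w` of the other values, so the
theorem is a closed form for the sum of chain products over all orderings of a set `S`.
Splitting off the first element `w₁` gives a recursion in `t`, and the closed form
`(t - a)^(m-1) / ∏_{w ∈ S} (w - a)(t - w)` survives it by Lagrange interpolation of the polynomial
`(t - a)^(m-1)`, of degree `< m`, at the nodes `S`.
-/

open Finset Polynomial

namespace CyclicSum

section Orderings

variable {ι : Type*} [DecidableEq ι]

noncomputable def orderings (s : Finset ι) : Finset (List ι) := s.toList.permutations.toFinset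

theorem mem_orderings {s : Finset ι} {l : List ι} :
    l ∈ orderings s ↔ (l : Multiset ι) = s.val := by
  rw [orderings, List.mem_toFinset, List.mem_permutations, ← Multiset.coe_eq_coe,
    Finset.coe_toList]

theorem orderings_empty : orderings (∅ : Finset ι) = {[]} := by
  simp [orderings]

theorem orderings_eq_biUnion {s : Finset ι} (hs : s.Nonempty) :
    orderings s = s.biUnion fun x => (orderings (s.erase x)).image (x :: ·) := by
  ext l
  simp only [mem_biUnion, mem_image, mem_orderings]
  constructor
  · rcases l with _ | ⟨x, l⟩
    · intro h
      exact absurd (val_eq_zero.mp h.symm) hs.ne_empty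
    · intro h
      have hx : x ∈ s := by rw [← mem_val, ← h]; simp
      refine ⟨x, hx, l, ?_, rfl⟩
      rw [erase_val, ← h, ← Multiset.cons_coe, Multiset.erase_cons_head]
  · rintro ⟨x, hx, l, hl, rfl⟩
    rw [← Multiset.cons_coe, hl, erase_val, Multiset.cons_erase (mem_val.mpr hx)]

theorem sum_orderings_of_nonempty {M : Type*} [AddCommMonoid M] {s : Finset ι}
    (hs : s.Nonempty) (f : List ι → M) :
    ∑ l ∈ orderings s, f l = ∑ x ∈ s, ∑ l ∈ orderings (s.erase x), f (x :: l) := by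
  rw [orderings_eq_biUnion hs, sum_biUnion]
  · exact sum_congr rfl fun x _ => sum_image fun _ _ _ _ h => List.cons_injective h
  · intro x _ y _ hxy
    simp only [Function.onFun, disjoint_left, mem_image]
    rintro _ ⟨l, _, rfl⟩ ⟨l', _, h⟩
    exact hxy (List.cons.inj h).1.symm

end Orderings

section Chain

variable {ι K : Type*} [Field K]

def chain (z : ι → K) (a : K) : K → List ι → K
  | t, [] => (t - a)⁻¹
  | t, i :: l => (t - z i)⁻¹ * chain z a (z i) l

theorem chain_map_range (z : ι → K) (t : K) (g : ℕ → ι) (m : ℕ) :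
    chain z (z (g (m + 1))) t ((List.range m).map fun k => g (k + 1)) =
      (t - z (g 1))⁻¹ * ∏ k ∈ range m, (z (g (k + 1)) - z (g (k + 2)))⁻¹ := by
  induction m generalizing t g with
  | zero => simp [chain]
  | succ m ih =>
    rw [List.range_succ_eq_map, List.map_cons, List.map_map, chain, prod_range_succ']
    have := ih (z (g 1)) (fun k => g (k + 1))
    simp only [Function.comp_def] at this ⊢
    rw [this]
    ring

variable [DecidableEq ι]

theorem pow_sub_eq_sum_lagrange {s : Finset ι} {z : ι → K} (hz : Set.InjOn z s) (a t : K)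
    {k : ℕ} (hk : k < #s) :
    (t - a) ^ k = ∑ x ∈ s, (z x - a) ^ k * ∏ i ∈ s.erase x, ((z x - z i)⁻¹ * (t - z i)) := by
  have hdeg : ((X - C a) ^ k : K[X]).degree < #s := by
    rw [degree_pow, degree_X_sub_C, nsmul_one]
    exact_mod_cast hk
  simpa [Lagrange.interpolate_apply, Lagrange.basis, Lagrange.basisDivisor, eval_prod,
      eval_finsetSum]
    using congrArg (eval t) (Lagrange.eq_interpolate hz hdeg)

theorem sum_orderings_chain {s : Finset ι} {z : ι → K} {a t : K} (hz : Set.InjOn z s)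
    (ha : ∀ i ∈ s, z i ≠ a) (ht : ∀ i ∈ s, z i ≠ t) :
    ∑ l ∈ orderings s, chain z a t l =
      (t - a) ^ ((#s : ℤ) - 1) / ∏ i ∈ s, ((z i - a) * (t - z i)) := by
  induction s using Finset.strongInduction generalizing t with
  | H s ih =>
  rcases s.eq_empty_or_nonempty with rfl | hs
  · simp [chain, orderings_empty]
  obtain ⟨k, hk⟩ : ∃ k, #s = k + 1 := Nat.exists_eq_succ_of_ne_zero hs.card_pos.ne'
  have hterm : ∀ x ∈ s, (t - z x)⁻¹ * ∑ l ∈ orderings (s.erase x), chain z a (z x) l =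
      ((z x - a) ^ k * ∏ i ∈ s.erase x, ((z x - z i)⁻¹ * (t - z i))) /
        ∏ i ∈ s, ((z i - a) * (t - z i)) := by
    intro x hx
    rw [ih _ (erase_ssubset hx) (hz.mono (erase_subset _ _))
      (fun i hi => ha i (mem_of_mem_erase hi))
      (fun i hi => hz.ne (mem_of_mem_erase hi) hx (ne_of_mem_erase hi)),
      card_erase_of_mem hx, hk, Nat.add_sub_cancel, zpow_sub_one₀ (sub_ne_zero.mpr (ha x hx)),
      zpow_natCast, ← mul_prod_erase s (fun i => (z i - a) * (t - z i)) hx]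
    simp only [prod_mul_distrib, prod_inv_distrib]
    have h1 : ∏ i ∈ s.erase x, (z i - a) ≠ 0 :=
      prod_ne_zero_iff.mpr fun i hi => sub_ne_zero.mpr (ha i (mem_of_mem_erase hi))
    have h2 : ∏ i ∈ s.erase x, (z x - z i) ≠ 0 := prod_ne_zero_iff.mpr fun i hi =>
      sub_ne_zero.mpr (hz.ne hx (mem_of_mem_erase hi) (ne_of_mem_erase hi).symm)
    have h3 : ∏ i ∈ s.erase x, (t - z i) ≠ 0 :=
      prod_ne_zero_iff.mpr fun i hi => sub_ne_zero.mpr (ht i (mem_of_mem_erase hi)).symm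
    have h4 : z x - a ≠ 0 := sub_ne_zero.mpr (ha x hx)
    have h5 : t - z x ≠ 0 := sub_ne_zero.mpr (ht x hx).symm
    field_simp
  rw [sum_orderings_of_nonempty hs]
  simp only [chain, ← mul_sum]
  rw [sum_congr rfl hterm, ← sum_div, ← pow_sub_eq_sum_lagrange hz a t (by omega : k < #s), hk]
  simp

theorem sum_orderings_neg_chain {s : Finset ι} {z : ι → K} {a t : K} (hz : Set.InjOn z s)
    (ha : ∀ i ∈ s, z i ≠ a) (ht : ∀ i ∈ s, z i ≠ t) :
    ∑ l ∈ orderings s, -chain z a t l =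
      (a - t) ^ ((#s : ℤ) - 1) / ∏ i ∈ s, ((a - z i) * (t - z i)) := by
  have hprod : ∏ i ∈ s, ((a - z i) * (t - z i)) =
      (-1) ^ #s * ∏ i ∈ s, ((z i - a) * (t - z i)) := by
    rw [← prod_const, ← prod_mul_distrib]
    exact prod_congr rfl fun _ _ => by ring
  have hpow : (a - t) ^ ((#s : ℤ) - 1) = -(-1) ^ #s * (t - a) ^ ((#s : ℤ) - 1) := by
    rw [← neg_sub t a, neg_eq_neg_one_mul (t - a), mul_zpow, zpow_sub_one₀ (by norm_num),
      zpow_natCast]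
    ring
  rw [sum_neg_distrib, sum_orderings_chain hz ha ht, hprod, hpow, neg_mul, neg_div,
    mul_div_mul_left _ _ (pow_ne_zero _ (by norm_num))]

end Chain

open Equiv Function

variable {α : Type*} [Fintype α]

def IsFullCycle (σ : Perm α) : Prop := ∀ i j, ∃ k : ℕ, (σ ^ k) i = j

theorem isFullCycle_of_forall_exists_pow_apply_eq {σ : Perm α} (x : α)
    (h : ∀ y, ∃ k : ℕ, (σ ^ k) x = y) : IsFullCycle σ := by
  have hx : ∀ y, σ.SameCycle x y := fun y =>
    let ⟨k, hk⟩ := h y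
    ⟨k, by simpa using hk⟩
  exact fun i j => ((hx i).symm.trans (hx j)).exists_nat_pow_eq

theorem IsFullCycle.minimalPeriod_eq {σ : Perm α} (h : IsFullCycle σ) (x : α) :
    minimalPeriod σ x = Fintype.card α := by
  have hpos : 0 < minimalPeriod σ x := NeZero.pos (minimalPeriod (σ • ·) x)
  refine (Fintype.card_fin _).symm.trans (Fintype.card_of_bijective (f := fun k : Fin _ => σ^[k] x)
    ⟨fun a b hab => Fin.ext (iterate_injOn_Iio_minimalPeriod a.isLt b.isLt hab), fun y => ?_⟩)
  obtain ⟨k, rfl⟩ := h x y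
  exact ⟨⟨k % _, Nat.mod_lt _ hpos⟩, iterate_mod_minimalPeriod_eq⟩

theorem IsFullCycle.pow_mod_card_apply {σ : Perm α} (h : IsFullCycle σ) (x : α) (k : ℕ) :
    (σ ^ (k % Fintype.card α)) x = (σ ^ k) x := by
  rw [← h.minimalPeriod_eq x]
  exact iterate_mod_minimalPeriod_eq

theorem IsFullCycle.pow_card_apply {σ : Perm α} (h : IsFullCycle σ) (x : α) :
    (σ ^ Fintype.card α) x = x := by
  simpa using (h.pow_mod_card_apply x (Fintype.card α)).symm

theorem IsFullCycle.injOn_pow_apply {σ : Perm α} (h : IsFullCycle σ) (x : α) :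
    Set.InjOn (fun k : ℕ => (σ ^ k) x) (Set.Iio (Fintype.card α)) := by
  rw [← h.minimalPeriod_eq x]
  exact iterate_injOn_Iio_minimalPeriod

theorem IsFullCycle.exists_lt_card_pow_apply_eq {σ : Perm α} (h : IsFullCycle σ) (x y : α) :
    ∃ k < Fintype.card α, (σ ^ k) x = y := by
  obtain ⟨k, rfl⟩ := h x y
  exact ⟨k % _, Nat.mod_lt _ (Fintype.card_pos_iff.mpr ⟨x⟩), h.pow_mod_card_apply x k⟩

def walk (σ : Perm α) (x : α) : List α :=
  (List.range (Fintype.card α - 1)).map fun k => (σ ^ (k + 1)) x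

theorem cons_walk (σ : Perm α) (x : α) :
    x :: walk σ x = (List.range (Fintype.card α)).map fun k => (σ ^ k) x := by
  obtain ⟨m, hm⟩ := Nat.exists_eq_succ_of_ne_zero (Fintype.card_pos_iff.mpr ⟨x⟩).ne'
  simp [walk, hm, List.range_succ_eq_map]

theorem IsFullCycle.nodup_cons_walk {σ : Perm α} (h : IsFullCycle σ) (x : α) :
    (x :: walk σ x).Nodup := by
  rw [cons_walk]
  exact List.nodup_range.map_on fun a ha b hb hab =>
    h.injOn_pow_apply x (List.mem_range.mp ha) (List.mem_range.mp hb) hab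

theorem IsFullCycle.mem_cons_walk {σ : Perm α} (h : IsFullCycle σ) (x y : α) :
    y ∈ x :: walk σ x := by
  obtain ⟨k, hk, rfl⟩ := h.exists_lt_card_pow_apply_eq x y
  rw [cons_walk]
  exact List.mem_map.mpr ⟨k, List.mem_range.mpr hk, rfl⟩

variable [DecidableEq α]

theorem IsFullCycle.walk_mem_orderings {σ : Perm α} (h : IsFullCycle σ) (x : α) :
    walk σ x ∈ orderings (univ.erase x) := by
  have hcons : ((x :: walk σ x : List α) : Multiset α) = univ.val :=
    (Multiset.Nodup.ext (Multiset.coe_nodup.mpr (h.nodup_cons_walk x)) univ.nodup).mpr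
      fun y => by simp [h.mem_cons_walk x y]
  rw [mem_orderings, erase_val, ← hcons, ← Multiset.cons_coe, Multiset.erase_cons_head]

theorem IsFullCycle.formPerm_cons_walk {σ : Perm α} (h : IsFullCycle σ) (x : α) :
    (x :: walk σ x).formPerm = σ := by
  ext y
  obtain ⟨k, hk, rfl⟩ := h.exists_lt_card_pow_apply_eq x y
  have := List.formPerm_apply_getElem _ (h.nodup_cons_walk x) k (by simp [cons_walk, hk])
  simp only [cons_walk, List.getElem_map, List.getElem_range, List.length_map,
    List.length_range] at this
  rw [cons_walk, this, h.pow_mod_card_apply, pow_succ', Perm.mul_apply]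

section FormPerm

variable {x : α} {l : List α}

theorem coe_cons_eq_univ_val_of_mem_orderings (hl : l ∈ orderings (univ.erase x)) :
    ((x :: l : List α) : Multiset α) = univ.val := by
  rw [← Multiset.cons_coe, mem_orderings.mp hl, erase_val,
    Multiset.cons_erase (mem_val.mpr (mem_univ x))]

theorem formPerm_pow_apply_of_mem_orderings (hl : l ∈ orderings (univ.erase x)) {k : ℕ}
    (hk : k < (x :: l).length) : ((x :: l).formPerm ^ k) x = (x :: l)[k] := by
  have hnd : (x :: l).Nodup :=
    Multiset.coe_nodup.mp (coe_cons_eq_univ_val_of_mem_orderings hl ▸ univ.nodup)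
  simp only [List.formPerm_pow_apply_head x l hnd, Nat.mod_eq_of_lt hk]

theorem isFullCycle_formPerm (hl : l ∈ orderings (univ.erase x)) :
    IsFullCycle (x :: l).formPerm := by
  refine isFullCycle_of_forall_exists_pow_apply_eq x fun y => ?_
  have hy : y ∈ x :: l :=
    Multiset.mem_coe.mp (coe_cons_eq_univ_val_of_mem_orderings hl ▸ mem_val.mpr (mem_univ y))
  obtain ⟨k, hk, rfl⟩ := List.getElem_of_mem hy
  exact ⟨k, formPerm_pow_apply_of_mem_orderings hl hk⟩

theorem walk_formPerm (hl : l ∈ orderings (univ.erase x)) :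
    walk (x :: l).formPerm x = l := by
  have hlen : (x :: l).length = Fintype.card α := by
    simpa using congrArg Multiset.card (coe_cons_eq_univ_val_of_mem_orderings hl)
  refine List.cons_injective (a := x) (List.ext_getElem (by simp [cons_walk, hlen]) ?_)
  intro k _ hk
  simp only [cons_walk, List.getElem_map, List.getElem_range]
  exact formPerm_pow_apply_of_mem_orderings hl hk

end FormPerm

theorem IsFullCycle.inv_sub_mul_prod_eq_neg_chain {K : Type*} [Field K] {σ : Perm α}
    (h : IsFullCycle σ) (z : α → K) (x : α) (t : K) :
    (z (σ x) - t)⁻¹ * ∏ i ∈ univ.erase x, (z i - z (σ i))⁻¹ = -chain z (z x) t (walk σ x) := by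
  set m := Fintype.card α - 1
  have hm : Fintype.card α = m + 1 := (Nat.succ_pred_eq_of_pos (Fintype.card_pos_iff.mpr ⟨x⟩)).symm
  have hprod : ∏ i ∈ univ.erase x, (z i - z (σ i))⁻¹ =
      ∏ k ∈ range m, (z ((σ ^ (k + 1)) x) - z ((σ ^ (k + 2)) x))⁻¹ := by
    rw [prod_eq_multiset_prod, ← mem_orderings.mp (h.walk_mem_orderings x), Multiset.map_coe,
      Multiset.prod_coe, walk, List.map_map, ← List.prod_toFinset _ List.nodup_range,
      List.toFinset_range]
    refine prod_congr rfl fun k _ => ?_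
    rw [Function.comp_apply, pow_succ' σ (k + 1), Perm.mul_apply]
  have hchain := chain_map_range z t (fun k => (σ ^ k) x) m
  rw [← hm, h.pow_card_apply, pow_one] at hchain
  rw [hprod, walk, hchain, ← neg_sub t, inv_neg, neg_mul]

theorem sum_isFullCycle_eq_sum_orderings [DecidablePred (IsFullCycle (α := α))]
    {M : Type*} [AddCommMonoid M] (x : α) (f : List α → M) :
    ∑ σ ∈ univ.filter IsFullCycle, f (walk σ x) = ∑ l ∈ orderings (univ.erase x), f l :=
  sum_nbij' (walk · x) (fun l => (x :: l).formPerm)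
    (fun _ hσ => (mem_filter.mp hσ).2.walk_mem_orderings x)
    (fun _ hl => mem_filter.mpr ⟨mem_univ _, isFullCycle_formPerm hl⟩)
    (fun _ hσ => (mem_filter.mp hσ).2.formPerm_cons_walk x)
    (fun _ hl => walk_formPerm hl)
    (fun _ _ => rfl)

end CyclicSum

open CyclicSum

open scoped Classical in
/-- Cyclic-sum lemma (Lemma A.1): for a field `K`, variables `z₁,…,zₙ` and any function `τ`,
the sum over all cyclic permutations `σ` (single cycle of length `n`) of
`1/(z_{σ(1)} - τ(z₁)) · ∏_{i=2}^n 1/(z_i - z_{σ(i)})` equals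
`(z₁ - τ(z₁))^{n-2} / ∏_{i=2}^n (z₁ - z_i)(τ(z₁) - z_i)`. -/
theorem cyclic_sum_lemma {K : Type*} [Field K] (n : ℕ) (hn : 1 ≤ n)
    (z : Fin n → K) (τ : K → K)
    (hz : Function.Injective z)
    (hτ : ∀ i : Fin n, z i ≠ τ (z ⟨0, hn⟩)) :
    ∑ σ ∈ Finset.univ.filter
        (fun σ : Equiv.Perm (Fin n) => ∀ i j : Fin n, ∃ k : ℕ, (σ ^ k) i = j),
      (z (σ ⟨0, hn⟩) - τ (z ⟨0, hn⟩))⁻¹ *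
        ∏ i ∈ Finset.univ.erase ⟨0, hn⟩, (z i - z (σ i))⁻¹
    = (z ⟨0, hn⟩ - τ (z ⟨0, hn⟩)) ^ ((n : ℤ) - 2) /
        ∏ i ∈ Finset.univ.erase ⟨0, hn⟩,
          ((z ⟨0, hn⟩ - z i) * (τ (z ⟨0, hn⟩) - z i)) := by
  set x : Fin n := ⟨0, hn⟩
  have key := sum_orderings_neg_chain (s := univ.erase x) hz.injOn
    (fun i hi => hz.ne (ne_of_mem_erase hi)) (fun i _ => hτ i)
  rw [← sum_isFullCycle_eq_sum_orderings x, card_erase_of_mem (mem_univ x), card_univ,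
    Fintype.card_fin, Nat.cast_sub hn, Nat.cast_one, sub_sub, one_add_one_eq_two] at key
  rw [← key]
  exact sum_congr (by ext; simp [IsFullCycle]) fun σ hσ =>
    (mem_filter.mp hσ).2.inv_sub_mul_prod_eq_neg_chain z x _
end

section
/- For any positive integer n, formal variables x_1,...,x_n, and any nonnegative integer D, the identity ∑_{i=1}^n x_i^{-D-1} / ∏_{j ≠ i} (x_i - x_j) = (-1)^{n-1} / (x_1 ⋯ x_n) · h_D(x_1^{-1}, ..., x_n^{-1}) holds, where h_D denotes the complete homogeneous symmetric polynomial of degree D. -/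
/-!
With `y = x⁻¹`, each factor `xᵢ - xⱼ` equals `-xᵢxⱼ (yᵢ - yⱼ)`, so the left side is
`(-1)^(n-1) (∏ y)` times the divided difference `∑ᵢ yᵢ^(D+n-1) / ∏_{j≠i} (yᵢ - yⱼ)`
of `X^(D+n-1)` at the nodes `y`. Writing `yᵢ^(m+1) = yᵢ^m (yᵢ - yₐ) + yₐ yᵢ^m` shows
that this divided difference obeys the recursion
`f(s ∪ {a}, D+1) = f(s, D+1) + yₐ f(s ∪ {a}, D)` of `h_D`, and at `D = 0` both equal `1`:
the divided difference of `X^(#s-1)` is the leading coefficient of its Lagrange interpolant.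
-/

open Finset

section CompleteHomogeneous

variable {ι R : Type*} [CommSemiring R] [DecidableEq ι]

def completeHomogeneous (s : Finset ι) (v : ι → R) (D : ℕ) : R :=
  ∑ k ∈ s.piAntidiag D, ∏ i ∈ s, v i ^ k i

@[simp]
theorem completeHomogeneous_zero (s : Finset ι) (v : ι → R) :
    completeHomogeneous s v 0 = 1 := by
  simp [completeHomogeneous]

@[simp]
theorem completeHomogeneous_empty_succ (v : ι → R) (D : ℕ) :
    completeHomogeneous ∅ v (D + 1) = 0 := by
  simp [completeHomogeneous]

theorem completeHomogeneous_cons {s : Finset ι} {a : ι} (ha : a ∉ s) (v : ι → R) (D : ℕ) :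
    completeHomogeneous (s.cons a ha) v D =
      ∑ p ∈ antidiagonal D, v a ^ p.1 * completeHomogeneous s v p.2 := by
  rw [completeHomogeneous, piAntidiag_cons, sum_disjiUnion]
  refine sum_congr rfl fun p _ => ?_
  rw [sum_map, completeHomogeneous, mul_sum]
  refine sum_congr rfl fun k hk => ?_
  have hka : k a = 0 := by
    by_contra h
    exact ha ((mem_piAntidiag.mp hk).2 a h)
  have hs : ∀ i ∈ s, v i ^ (k i + if i = a then p.1 else 0) = v i ^ k i := fun i hi => by
    simp [ne_of_mem_of_not_mem hi ha]
  simp only [addRightEmbedding_apply, Pi.add_apply, cons_eq_insert, prod_insert ha,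
    prod_congr rfl hs, hka, if_true, zero_add]

theorem completeHomogeneous_cons_succ {s : Finset ι} {a : ι} (ha : a ∉ s) (v : ι → R)
    (D : ℕ) :
    completeHomogeneous (s.cons a ha) v (D + 1) =
      completeHomogeneous s v (D + 1) + v a * completeHomogeneous (s.cons a ha) v D := by
  rw [completeHomogeneous_cons, completeHomogeneous_cons, Nat.antidiagonal_succ, sum_cons,
    sum_map, mul_sum]
  simp [pow_succ, mul_assoc, mul_left_comm]

end CompleteHomogeneous

theorem piAntidiag_univ_eq_filter_piFinset {ι : Type*} [Fintype ι] [DecidableEq ι] (D : ℕ) :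
    univ.piAntidiag D = {k ∈ Fintype.piFinset fun _ : ι => range (D + 1) | ∑ i, k i = D} := by
  ext k
  simp only [mem_piAntidiag, mem_filter, Fintype.mem_piFinset, mem_range, mem_univ, implies_true,
    and_true, Nat.lt_succ_iff, iff_and_self]
  rintro rfl i
  exact single_le_sum (fun j _ => Nat.zero_le (k j)) (mem_univ i)

section DividedDifference

variable {ι K : Type*} [Field K] [DecidableEq ι] {s : Finset ι} {v : ι → K}

def dividedDiffPow (s : Finset ι) (v : ι → K) (m : ℕ) : K :=
  ∑ i ∈ s, v i ^ m / ∏ j ∈ s.erase i, (v i - v j)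

theorem dividedDiffPow_card_sub_one (hv : Set.InjOn v s) (hs : s.Nonempty) :
    dividedDiffPow s v (#s - 1) = 1 := by
  have hdeg : ((Polynomial.X : Polynomial K) ^ (#s - 1)).degree < #s := by
    rw [Polynomial.degree_X_pow]
    exact_mod_cast Nat.sub_lt hs.card_pos one_pos
  simpa [dividedDiffPow] using (Lagrange.coeff_eq_sum hv hdeg).symm

theorem dividedDiffPow_cons_succ {a : ι} (ha : a ∉ s) (hv : Set.InjOn v (s.cons a ha))
    (m : ℕ) :
    dividedDiffPow (s.cons a ha) v (m + 1) =
      dividedDiffPow s v m + v a * dividedDiffPow (s.cons a ha) v m := by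
  have hterm : ∀ i ∈ s, v i ^ (m + 1) / ∏ j ∈ (s.cons a ha).erase i, (v i - v j) =
      v i ^ m / ∏ j ∈ s.erase i, (v i - v j) +
        v a * (v i ^ m / ∏ j ∈ (s.cons a ha).erase i, (v i - v j)) := fun i hi => by
    have hia : i ≠ a := ne_of_mem_of_not_mem hi ha
    have hsub : v i - v a ≠ 0 :=
      sub_ne_zero.mpr fun h => hia (hv (by simp [hi]) (by simp) h)
    rw [erase_cons_of_ne ha hia.symm, prod_cons]
    field_simp
    ring
  simp only [dividedDiffPow, sum_cons, erase_cons, sum_congr rfl hterm, sum_add_distrib, mul_add,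
    mul_sum]
  ring

theorem dividedDiffPow_eq_completeHomogeneous (hv : Set.InjOn v s) (hs : s.Nonempty) (D : ℕ) :
    dividedDiffPow s v (D + (#s - 1)) = completeHomogeneous s v D := by
  induction D generalizing s with
  | zero => simpa using dividedDiffPow_card_sub_one hv hs
  | succ D ih =>
    induction hs using Nonempty.cons_induction with
    | singleton a =>
      have hD := ih (s := {a}) hv (singleton_nonempty a)
      rw [← cons_empty, completeHomogeneous_cons_succ, completeHomogeneous_empty_succ, zero_add,
        cons_empty, ← hD]
      simp [dividedDiffPow, pow_succ']
    | cons a s ha hs ih' =>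
      have hcard : #(s.cons a ha) - 1 = #s := by rw [card_cons, Nat.add_sub_cancel]
      have hs' : D + 1 + (#s - 1) = D + #s := by have := hs.card_pos; omega
      rw [hcard, add_right_comm, dividedDiffPow_cons_succ ha hv, completeHomogeneous_cons_succ,
        ← ih' (hv.mono (subset_cons ha)), hs', ← ih hv (cons_nonempty ha), hcard]

theorem prod_erase_sub_eq_mul_prod_erase_inv_sub_inv {x : ι → K} (hx : ∀ j ∈ s, x j ≠ 0)
    {i : ι} (hi : i ∈ s) :
    ∏ j ∈ s.erase i, (x i - x j) =
      (-1) ^ (#s - 1) * x i ^ (#s - 1) * (∏ j ∈ s.erase i, x j) *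
        ∏ j ∈ s.erase i, ((x i)⁻¹ - (x j)⁻¹) := by
  have hfactor : ∀ j ∈ s.erase i, x i - x j = -1 * x i * x j * ((x i)⁻¹ - (x j)⁻¹) :=
    fun j hj => by
      have hxi := hx i hi
      have hxj := hx j (mem_of_mem_erase hj)
      field_simp
      ring
  rw [prod_congr rfl hfactor, prod_mul_distrib, prod_mul_distrib, prod_mul_distrib, prod_const,
    prod_const, card_erase_of_mem hi]

theorem sum_inv_pow_div_prod_sub_eq_dividedDiffPow_inv {x : ι → K} (hx : ∀ j ∈ s, x j ≠ 0)
    (D : ℕ) :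
    ∑ i ∈ s, (x i)⁻¹ ^ (D + 1) / ∏ j ∈ s.erase i, (x i - x j) =
      (-1) ^ (#s - 1) / (∏ j ∈ s, x j) * dividedDiffPow s x⁻¹ (D + (#s - 1)) := by
  rw [dividedDiffPow, mul_sum]
  refine sum_congr rfl fun i hi => ?_
  have hrest : ∏ j ∈ s.erase i, x j ≠ 0 :=
    prod_ne_zero_iff.mpr fun j hj => hx j (mem_of_mem_erase hj)
  rw [prod_erase_sub_eq_mul_prod_erase_inv_sub_inv hx hi, ← mul_prod_erase s x hi]
  simp only [Pi.inv_apply]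
  generalize ∏ j ∈ s.erase i, ((x i)⁻¹ - (x j)⁻¹) = Q
  simp only [inv_pow]
  have hsign : ((-1 : K) ^ (#s - 1)) ^ 2 = 1 := by simp [neg_one_pow_eq_or]
  field_simp
  rw [hsign]
  ring

end DividedDifference

/-- For pairwise distinct nonzero `x₁,…,xₙ` and any `D ≥ 0`:
`∑ᵢ xᵢ^{-D-1} / ∏_{j≠i}(xᵢ - xⱼ) = (-1)^{n-1}/(x₁⋯xₙ) · h_D(x₁⁻¹,…,xₙ⁻¹)`,
where `h_D` is the complete homogeneous symmetric polynomial of degree `D`,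
written as the sum over all monomials of total degree `D`. -/
theorem sum_inv_pow_eq_complete_homogeneous {K : Type*} [Field K]
    (n : ℕ) (hn : 1 ≤ n) (D : ℕ) (x : Fin n → K)
    (hinj : Function.Injective x) (hx0 : ∀ i, x i ≠ 0) :
    ∑ i : Fin n, (x i)⁻¹ ^ (D + 1) / ∏ j ∈ Finset.univ.erase i, (x i - x j)
    = (-1) ^ (n - 1) / (∏ i, x i) *
        ∑ k ∈ Finset.filter (fun k => ∑ i, k i = D)
            (Fintype.piFinset fun _ : Fin n => Finset.range (D + 1)),
          ∏ i, (x i)⁻¹ ^ (k i) := by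
  have hne : (univ : Finset (Fin n)).Nonempty := univ_nonempty_iff.mpr ⟨⟨0, hn⟩⟩
  have hinv : Set.InjOn x⁻¹ (univ : Finset (Fin n)) := (inv_injective.comp hinj).injOn
  rw [sum_inv_pow_div_prod_sub_eq_dividedDiffPow_inv (fun i _ => hx0 i),
    dividedDiffPow_eq_completeHomogeneous hinv hne,
    completeHomogeneous, piAntidiag_univ_eq_filter_piFinset, card_univ, Fintype.card_fin]
  simp only [Pi.inv_apply]
end

section
/- Watson's lemma: Let f : ℝ_{>0} → ℂ be a continuous function such that (i) there exists an integer d ≥ 0 with f(t) = O(t^d) as t → 0^+, and (ii) there exists ν ∈ ℝ with f(t) = O(e^{νt}) as t → +∞. Then ∫_0^∞ e^{-tx} f(t) dt = O(x^{-(d+1)}) as x → +∞. -/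
open Filter MeasureTheory Set Asymptotics Real

open scoped Nat Topology

/-!
Continuity glues the two growth conditions into one bound `‖f t‖ ≤ C t^d e^{νt}` on all of
`(0, ∞)`: on a compact middle range `f` is bounded and the weight is bounded below. Against
`e^{-tx}` this weight integrates to `d! / (x - ν)^(d+1)` (a Gamma integral), and
`(x - ν)^(d+1) ~ x^(d+1)` as `x → ∞`.
-/

theorem isBigO_principal_Ioi_of_continuousOn {E F : Type*} [NormedAddCommGroup E]
    [NormedAddCommGroup F] {f : ℝ → E} {g : ℝ → F} {a : ℝ} (hf : ContinuousOn f (Ioi a))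
    (hg : ContinuousOn g (Ioi a)) (hg0 : ∀ t ∈ Ioi a, g t ≠ 0) (h0 : f =O[𝓝[>] a] g)
    (hinf : f =O[atTop] g) : f =O[𝓟 (Ioi a)] g := by
  obtain ⟨c₀, hc₀⟩ := h0.bound
  obtain ⟨δ, hδ, hδ_sub⟩ := mem_nhdsGT_iff_exists_Ioc_subset.mp hc₀
  obtain ⟨c₁, hc₁⟩ := hinf.bound
  obtain ⟨T, hT⟩ := eventually_atTop.mp hc₁
  set T' := max δ T
  have hK : Icc δ T' ⊆ Ioi a := fun t ht => hδ.trans_le ht.1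
  have hleft : f =O[𝓟 (Ioc a δ)] g := isBigO_principal.mpr ⟨c₀, hδ_sub⟩
  have hmid : f =O[𝓟 (Icc δ T')] g :=
    ((hf.mono hK).isBigO_principal isCompact_Icc (by norm_num : ‖(1 : ℝ)‖ ≠ 0)).trans
      ((hg.mono hK).isBigO_rev_principal isCompact_Icc (fun t ht => hg0 t (hK ht)) 1)
  have hright : f =O[𝓟 (Ici T')] g :=
    isBigO_principal.mpr ⟨c₁, fun t ht => hT t (le_of_max_le_right ht)⟩
  refine ((hleft.sup hmid).sup hright).mono ?_
  rw [sup_principal, sup_principal, principal_mono]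
  intro t ht
  rcases le_or_gt t δ with htδ | htδ
  · exact Or.inl (Or.inl ⟨ht, htδ⟩)
  rcases le_or_gt t T' with htT | htT
  · exact Or.inl (Or.inr ⟨htδ.le, htT⟩)
  · exact Or.inr htT.le

theorem integral_pow_mul_exp_neg_mul_Ioi (k : ℕ) {r : ℝ} (hr : 0 < r) :
    ∫ t in Ioi (0 : ℝ), t ^ k * exp (-(r * t)) = k ! / r ^ (k + 1) := by
  have key := integral_rpow_mul_exp_neg_mul_Ioi (by positivity : (0 : ℝ) < k + 1) hr
  simp only [add_sub_cancel_right, rpow_natCast, Gamma_nat_eq_factorial] at key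
  rw [key, one_div, inv_rpow hr.le, ← Nat.cast_succ, rpow_natCast, inv_mul_eq_div]

theorem integrableOn_pow_mul_exp_neg_mul_Ioi (k : ℕ) {r : ℝ} (hr : 0 < r) :
    IntegrableOn (fun t : ℝ => t ^ k * exp (-(r * t))) (Ioi 0) :=
  .of_integral_ne_zero (by rw [integral_pow_mul_exp_neg_mul_Ioi k hr]; positivity)

theorem norm_setIntegral_exp_neg_mul_smul_le {E : Type*} [NormedAddCommGroup E]
    [NormedSpace ℝ E] {f : ℝ → E} {C ν x : ℝ} (k : ℕ)
    (hf : ∀ t ∈ Ioi (0 : ℝ), ‖f t‖ ≤ C * (t ^ k * exp (ν * t))) (hx : ν < x) :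
    ‖∫ t in Ioi (0 : ℝ), exp (-(t * x)) • f t‖ ≤ C * (k ! / (x - ν) ^ (k + 1)) := by
  have hr : 0 < x - ν := sub_pos.mpr hx
  rw [← integral_pow_mul_exp_neg_mul_Ioi k hr, ← integral_const_mul]
  refine norm_integral_le_of_norm_le ((integrableOn_pow_mul_exp_neg_mul_Ioi k hr).const_mul C) ?_
  filter_upwards [ae_restrict_mem measurableSet_Ioi] with t ht
  calc ‖exp (-(t * x)) • f t‖ = exp (-(t * x)) * ‖f t‖ := by
        rw [norm_smul, norm_of_nonneg (exp_pos _).le]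
    _ ≤ exp (-(t * x)) * (C * (t ^ k * exp (ν * t))) := by gcongr; exact hf t ht
    _ = C * (t ^ k * exp (-((x - ν) * t))) := by
        rw [show -((x - ν) * t) = -(t * x) + ν * t by ring, exp_add]; ring

theorem isBigO_setIntegral_exp_neg_mul_smul {E : Type*} [NormedAddCommGroup E]
    [NormedSpace ℝ E] {f : ℝ → E} (k : ℕ) (ν : ℝ)
    (hf : f =O[𝓟 (Ioi 0)] fun t => t ^ k * exp (ν * t)) :
    (fun x : ℝ => ∫ t in Ioi (0 : ℝ), exp (-(t * x)) • f t)
      =O[atTop] fun x => ((x - ν) ^ (k + 1))⁻¹ := by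
  obtain ⟨C, hC⟩ := isBigO_principal.mp hf
  have hC' : ∀ t ∈ Ioi (0 : ℝ), ‖f t‖ ≤ C * (t ^ k * exp (ν * t)) := fun t ht => by
    simpa [abs_of_pos (mem_Ioi.mp ht)] using hC t ht
  refine isBigO_iff.mpr ⟨C * k !, (eventually_gt_atTop ν).mono fun x hx => ?_⟩
  have hr : 0 < x - ν := sub_pos.mpr hx
  calc _ ≤ C * (k ! / (x - ν) ^ (k + 1)) := norm_setIntegral_exp_neg_mul_smul_le k hC' hx
    _ = C * k ! * ‖((x - ν) ^ (k + 1))⁻¹‖ := by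
        rw [norm_inv, norm_pow, norm_of_nonneg hr.le]; ring

theorem isBigO_inv_sub_pow_atTop (ν : ℝ) (n : ℕ) :
    (fun x : ℝ => ((x - ν) ^ n)⁻¹) =O[atTop] fun x => (x ^ n)⁻¹ :=
  (((IsEquivalent.refl (u := id)).sub_isLittleO (isLittleO_const_id_atTop ν)).pow n).inv.isBigO

/-- Watson's lemma: if `f : ℝ → ℂ` is continuous on `(0,∞)`, `f(t) = O(t^d)` as `t → 0⁺`
and `f(t) = O(e^{νt})` as `t → +∞`, then `∫_0^∞ e^{-tx} f(t) dt = O(x^{-(d+1)})`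
as `x → +∞`. -/
theorem watson_lemma (f : ℝ → ℂ) (hf : ContinuousOn f (Set.Ioi 0))
    (d : ℕ) (h0 : f =O[nhdsWithin 0 (Set.Ioi 0)] fun t : ℝ => t ^ d)
    (ν : ℝ) (hinf : f =O[atTop] fun t : ℝ => Real.exp (ν * t)) :
    (fun x : ℝ => ∫ t in Set.Ioi (0 : ℝ), Real.exp (-(t * x)) • f t)
      =O[atTop] fun x : ℝ => (x ^ (d + 1))⁻¹ := by
  have hexp_near : (fun _ => (1 : ℝ)) =O[𝓝[>] 0] fun t => exp (ν * t) := by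
    refine (IsEquivalent.isBigO (IsEquivalent.symm ?_)).mono nhdsWithin_le_nhds
    refine (isEquivalent_const_iff_tendsto one_ne_zero).mpr ?_
    simpa using ((continuous_const_mul ν).rexp).tendsto 0
  have hpow_far : (fun _ => (1 : ℝ)) =O[atTop] fun t : ℝ => t ^ d :=
    (isBigO_const_left_iff_pos_le_norm one_ne_zero).mpr ⟨1, one_pos,
      (eventually_ge_atTop 1).mono fun t ht => by
        rw [norm_pow, norm_of_nonneg (zero_le_one.trans ht)]; exact one_le_pow₀ ht⟩
  have hweight : f =O[𝓟 (Ioi 0)] fun t => t ^ d * exp (ν * t) :=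
    isBigO_principal_Ioi_of_continuousOn hf (by fun_prop)
      (fun t ht => mul_ne_zero (pow_ne_zero d (ne_of_gt ht)) (exp_pos _).ne')
      (h0.trans (by simpa using (isBigO_refl (fun t : ℝ => t ^ d) _).mul hexp_near))
      (hinf.trans (by simpa using hpow_far.mul (isBigO_refl (fun t => exp (ν * t)) _)))
  exact (isBigO_setIntegral_exp_neg_mul_smul d ν hweight).trans (isBigO_inv_sub_pow_atTop ν _)
end

section
/- Let Ω ⊆ ℂ be a star-shaped open set containing 0 (i.e., for every s ∈ Ω the segment [0, s] is contained in Ω), and let φ̂ and ψ̂ be holomorphic on Ω. Then their convolution product (φ̂ ∗ ψ̂)(s) = d/ds ∫_0^s φ̂(σ) ψ̂(s − σ) dσ is holomorphic on Ω. -/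
/-!
The convolution is `s ↦ d/ds (s · G s)` with `G s = ∫₀¹ φ(t s) ψ(s - t s) dt`. Star-shapedness
keeps both arguments `t s` and `s - t s = (1 - t) s` inside `Ω`, so the integrand and its
`s`-derivative are jointly continuous on `Ω × [0, 1]`, hence bounded on compact neighbourhoods,
and `G` may be differentiated under the integral sign. Thus `s · G s` is holomorphic on `Ω`,
and so is its derivative.
-/

open Set Metric MeasureTheory Function
open scoped Interval

section ParametricIntervalIntegral

variable {𝕜 E : Type*} [RCLike 𝕜] [NormedAddCommGroup E] [NormedSpace ℝ E] [NormedSpace 𝕜 E]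
  {F F' : 𝕜 → ℝ → E} {U : Set 𝕜} {a b : ℝ}

theorem hasDerivAt_intervalIntegral_of_continuousOn (hU : IsOpen U)
    (hF : ContinuousOn (uncurry F) (U ×ˢ [[a, b]]))
    (hF' : ContinuousOn (uncurry F') (U ×ˢ [[a, b]]))
    (hderiv : ∀ x ∈ U, ∀ t ∈ [[a, b]], HasDerivAt (F · t) (F' x t) x)
    {x₀ : 𝕜} (hx₀ : x₀ ∈ U) :
    HasDerivAt (fun x ↦ ∫ t in a..b, F x t) (∫ t in a..b, F' x₀ t) x₀ := by
  obtain ⟨r, hr, hrU⟩ := nhds_basis_closedBall.mem_iff.1 (hU.mem_nhds hx₀)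
  have hballU : ball x₀ r ⊆ U := ball_subset_closedBall.trans hrU
  obtain ⟨C, hC⟩ := ((isCompact_closedBall x₀ r).prod isCompact_uIcc).exists_bound_of_continuousOn
    (hF'.mono (prod_mono hrU subset_rfl))
  refine (intervalIntegral.hasDerivAt_integral_of_dominated_loc_of_deriv_le (bound := fun _ ↦ C)
    (ball_mem_nhds x₀ hr) ?_ (hF.uncurry_left x₀ hx₀).intervalIntegrable
    (((hF'.uncurry_left x₀ hx₀).mono uIoc_subset_uIcc).aestronglyMeasurable measurableSet_uIoc)
    (ae_of_all _ fun t ht x hx ↦ hC (x, t) ⟨ball_subset_closedBall hx, uIoc_subset_uIcc ht⟩)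
    intervalIntegrable_const
    (ae_of_all _ fun t ht x hx ↦ hderiv x (hballU hx) t (uIoc_subset_uIcc ht))).2
  filter_upwards [ball_mem_nhds x₀ hr] with x hx
  exact ((hF.uncurry_left x (hballU hx)).mono uIoc_subset_uIcc).aestronglyMeasurable
    measurableSet_uIoc

theorem differentiableOn_intervalIntegral_of_continuousOn (hU : IsOpen U)
    (hF : ContinuousOn (uncurry F) (U ×ˢ [[a, b]]))
    (hF' : ContinuousOn (uncurry F') (U ×ˢ [[a, b]]))
    (hderiv : ∀ x ∈ U, ∀ t ∈ [[a, b]], HasDerivAt (F · t) (F' x t) x) :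
    DifferentiableOn 𝕜 (fun x ↦ ∫ t in a..b, F x t) U := fun _ hx ↦
  (hasDerivAt_intervalIntegral_of_continuousOn hU hF hF' hderiv hx).differentiableAt
    |>.differentiableWithinAt

end ParametricIntervalIntegral

section StarConvex

variable {Ω : Set ℂ}

theorem StarConvex.mapsTo_ofReal_mul (hΩ : StarConvex ℝ 0 Ω) :
    MapsTo (fun p : ℂ × ℝ ↦ (p.2 : ℂ) * p.1) (Ω ×ˢ [[0, 1]]) Ω := by
  rintro ⟨s, t⟩ ⟨hs, ht⟩
  rw [uIcc_of_le zero_le_one] at ht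
  simpa [Complex.real_smul] using hΩ.smul_mem hs ht.1 ht.2

theorem StarConvex.mapsTo_sub_ofReal_mul (hΩ : StarConvex ℝ 0 Ω) :
    MapsTo (fun p : ℂ × ℝ ↦ p.1 - (p.2 : ℂ) * p.1) (Ω ×ˢ [[0, 1]]) Ω := by
  rintro ⟨s, t⟩ ⟨hs, ht⟩
  rw [uIcc_of_le zero_le_one] at ht
  have h := hΩ.smul_mem hs (sub_nonneg.2 ht.2) (sub_le_self 1 ht.1)
  rw [Complex.real_smul] at h
  convert h using 1
  push_cast
  ring

end StarConvex

theorem differentiableOn_convolutionIntegral {Ω : Set ℂ} (hΩ : IsOpen Ω)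
    (hstar : StarConvex ℝ 0 Ω) {φ ψ : ℂ → ℂ} (hφ : DifferentiableOn ℂ φ Ω)
    (hψ : DifferentiableOn ℂ ψ Ω) :
    DifferentiableOn ℂ (fun s : ℂ ↦ ∫ t in (0:ℝ)..1, φ (t * s) * ψ (s - t * s)) Ω := by
  have hmul := hstar.mapsTo_ofReal_mul
  have hsub := hstar.mapsTo_sub_ofReal_mul
  have hmul_cont : Continuous fun p : ℂ × ℝ ↦ (p.2 : ℂ) * p.1 := by fun_prop
  have hsub_cont : Continuous fun p : ℂ × ℝ ↦ p.1 - (p.2 : ℂ) * p.1 := by fun_prop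
  have hφc := hφ.continuousOn.comp hmul_cont.continuousOn hmul
  have hψc := hψ.continuousOn.comp hsub_cont.continuousOn hsub
  have hφ'c := (hφ.deriv hΩ).continuousOn.comp hmul_cont.continuousOn hmul
  have hψ'c := (hψ.deriv hΩ).continuousOn.comp hsub_cont.continuousOn hsub
  have ht_cont : ContinuousOn (fun p : ℂ × ℝ ↦ (p.2 : ℂ)) (Ω ×ˢ [[0, 1]]) := by fun_prop
  refine differentiableOn_intervalIntegral_of_continuousOn (F' := fun s t ↦
      deriv φ (t * s) * t * ψ (s - t * s) + φ (t * s) * (deriv ψ (s - t * s) * (1 - t)))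
    hΩ (hφc.mul hψc)
    (((hφ'c.mul ht_cont).mul hψc).add (hφc.mul (hψ'c.mul (continuousOn_const.sub ht_cont))))
    fun s hs t ht ↦ ?_
  have h1 : HasDerivAt (fun x : ℂ ↦ (t : ℂ) * x) t s := hasDerivAt_const_mul _
  have h2 : HasDerivAt (fun x : ℂ ↦ x - (t : ℂ) * x) (1 - t) s := (hasDerivAt_id s).sub h1
  exact ((hφ.differentiableAt (hΩ.mem_nhds (hmul (mk_mem_prod hs ht)))).hasDerivAt.comp s h1).mul
    ((hψ.differentiableAt (hΩ.mem_nhds (hsub (mk_mem_prod hs ht)))).hasDerivAt.comp s h2)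

/-- Analyticity of the convolution product (Lemma 2.9): if `Ω ⊆ ℂ` is a star-shaped
open set (for every `s ∈ Ω` the segment `[0,s]` lies in `Ω`) and `φ`, `ψ` are
holomorphic on `Ω`, then the convolution
`(φ ∗ ψ)(s) = d/ds ∫_0^s φ(σ) ψ(s-σ) dσ`
(where the integral along `[0,s]` is parametrised by `σ = t·s`, `t ∈ [0,1]`)
is holomorphic on `Ω`. -/
theorem convolution_holomorphic_on_star_shaped (Ω : Set ℂ) (hΩ : IsOpen Ω)
    (hstar : ∀ s ∈ Ω, segment ℝ 0 s ⊆ Ω)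
    (φ ψ : ℂ → ℂ) (hφ : DifferentiableOn ℂ φ Ω) (hψ : DifferentiableOn ℂ ψ Ω) :
    DifferentiableOn ℂ
      (deriv fun s : ℂ =>
        s * ∫ t in (0:ℝ)..1, φ ((t : ℂ) * s) * ψ (s - (t : ℂ) * s)) Ω :=
  (differentiableOn_id.mul (differentiableOn_convolutionIntegral hΩ
    (starConvex_iff_segment_subset.2 hstar) hφ hψ)).deriv hΩ
end

section
/- Schur's evaluation of the Vandermonde determinant on roots of unity: for ζ = e^{2πi/r} with r ≥ 2, the determinant of the r × r matrix (ζ^{αm}) with rows indexed by m = 0,...,r−1 and columns by α = 1,...,r equals r^{r/2} · (−1)^{(r−1)(3r+2)/4}. -/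
open Complex ComplexConjugate Finset Matrix Real

/-!
With `θ_a = 2π(a+1)/r` the matrix is the transposed Vandermonde matrix of the points `e^{iθ_a}`,
so its determinant is `∏_{i<j} (e^{iθ_j} - e^{iθ_i})`. Each factor is
`2 sin((θ_j - θ_i)/2) · e^{i((θ_i + θ_j)/2 + π/2)}` with a nonnegative sine, and the phases add up
to `(r-1)(3r+2)π/4`. The modulus comes from the orthogonality of the characters: `M Mᴴ = r • 1`,
hence `|det M|² = r^r`.
-/

theorem Complex.exp_mul_I_sub_exp_mul_I (x y : ℝ) :
    cexp (y * I) - cexp (x * I) =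
      (2 * Real.sin ((y - x) / 2) : ℝ) * cexp (((x + y) / 2 + π / 2 : ℝ) * I) := by
  have hx : cexp (x * I) = cexp (-((y - x) / 2 : ℝ) * I) * cexp (((x + y) / 2 : ℝ) * I) := by
    rw [← Complex.exp_add]; push_cast; ring_nf
  have hy : cexp (y * I) = cexp (((y - x) / 2 : ℝ) * I) * cexp (((x + y) / 2 : ℝ) * I) := by
    rw [← Complex.exp_add]; push_cast; ring_nf
  rw [hx, hy]
  generalize (y - x) / 2 = t
  generalize (x + y) / 2 = s
  push_cast
  rw [add_mul, Complex.exp_add, exp_pi_div_two_mul_I, Complex.sin]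
  linear_combination (cexp (t * I) - cexp (-t * I)) * cexp (s * I) * I_sq

theorem Complex.exp_natCast_mul_pi_div_two_mul_I (n : ℕ) :
    cexp ((n * (π / 2) : ℝ) * I) = I ^ n := by
  rw [ofReal_mul, ofReal_natCast, mul_assoc, Complex.exp_nat_mul, ofReal_div, ofReal_ofNat,
    exp_pi_div_two_mul_I]

theorem Fin.sum_sum_Ioi_add {M : Type*} [AddCommMonoid M] {n : ℕ} (f : Fin n → M) :
    ∑ i, ∑ j ∈ Ioi i, (f i + f j) = (n - 1) • ∑ i, f i := by
  rw [Finset.sum_sum_Ioi_add_eq_sum_sum_off_diag (fun _ i => f i), smul_sum]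
  simp [card_compl]

theorem Fin.sum_natCast_add_one (n : ℕ) : ∑ a : Fin n, ((a : ℕ) + 1 : ℝ) = n * (n + 1) / 2 := by
  induction n with
  | zero => simp
  | succ n ih =>
    rw [Fin.sum_univ_castSucc]
    simp only [Fin.val_castSucc, ih, Fin.val_last]
    push_cast
    ring

theorem sum_fin_pow_succ_eq_zero {K : Type*} [Field K] {n : ℕ} {w : K} (hwn : w ^ n = 1)
    (hw : w ≠ 1) : ∑ a : Fin n, w ^ ((a : ℕ) + 1) = 0 := by
  have hgeom : ∑ a ∈ range n, w ^ a = 0 :=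
    (mul_eq_zero.mp (by rw [geom_sum_mul, hwn, sub_self])).resolve_right (sub_ne_zero.mpr hw)
  simp_rw [Fin.sum_univ_eq_sum_range (fun a => w ^ (a + 1)), pow_succ, ← sum_mul, hgeom, zero_mul]

theorem Matrix.det_vandermonde_exp_mul_I {n : ℕ} (θ : Fin n → ℝ) :
    (vandermonde fun a => cexp (θ a * I)).det =
      (∏ i, ∏ j ∈ Ioi i, 2 * Real.sin ((θ j - θ i) / 2) : ℝ) *
        cexp ((∑ i, ∑ j ∈ Ioi i, ((θ i + θ j) / 2 + π / 2) : ℝ) * I) := by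
  rw [det_vandermonde, ofReal_sum, sum_mul, Complex.exp_sum, ofReal_prod, ← prod_mul_distrib]
  refine prod_congr rfl fun i _ => ?_
  rw [ofReal_sum, sum_mul, Complex.exp_sum, ofReal_prod, ← prod_mul_distrib]
  exact prod_congr rfl fun j _ => Complex.exp_mul_I_sub_exp_mul_I _ _

theorem prod_prod_Ioi_two_sin_half_sub_nonneg {n : ℕ} {θ : Fin n → ℝ} (hθ : Monotone θ)
    (hspan : ∀ i j, θ j - θ i ≤ 2 * π) :
    0 ≤ ∏ i, ∏ j ∈ Ioi i, 2 * Real.sin ((θ j - θ i) / 2) :=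
  prod_nonneg fun i _ => prod_nonneg fun j hj => mul_nonneg zero_le_two <|
    sin_nonneg_of_nonneg_of_le_pi (div_nonneg (sub_nonneg.mpr (hθ (mem_Ioi.mp hj).le)) zero_le_two)
      (by linarith [hspan i j])

theorem RCLike.norm_det_of_mul_conjTranspose_eq_smul_one {K ι : Type*} [RCLike K] [Fintype ι]
    [DecidableEq ι] {A : Matrix ι ι K} {c : ℝ} (hc : 0 ≤ c) (hA : A * Aᴴ = (c : K) • 1) :
    ‖A.det‖ = √c ^ Fintype.card ι := by
  have hsq : ‖A.det‖ ^ 2 = (√c ^ Fintype.card ι) ^ 2 := by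
    have := congrArg det hA
    rw [det_mul, det_conjTranspose, det_smul, det_one, mul_one, RCLike.star_def,
      RCLike.mul_conj] at this
    rw [← pow_mul, mul_comm, pow_mul, Real.sq_sqrt hc]
    exact_mod_cast this
  exact (pow_left_inj₀ (norm_nonneg _) (by positivity) two_ne_zero).mp hsq

theorem IsPrimitiveRoot.powMatrix_mul_conjTranspose {ζ : ℂ} {n : ℕ} (hζ : IsPrimitiveRoot ζ n) :
    (of fun m a : Fin n => ζ ^ ((a + 1 : ℕ) * m)) *
        (of fun m a : Fin n => ζ ^ ((a + 1 : ℕ) * m))ᴴ = (n : ℂ) • 1 := by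
  rcases Nat.eq_zero_or_pos n with rfl | hn
  · exact Subsingleton.elim _ _
  have hζ0 : ζ ≠ 0 := hζ.ne_zero hn.ne'
  have hconj : conj ζ = ζ⁻¹ := (inv_eq_conj (hζ.norm'_eq_one hn.ne')).symm
  ext m k
  have hentry : ∀ a : Fin n, ζ ^ ((a + 1 : ℕ) * m) * star (ζ ^ ((a + 1 : ℕ) * k)) =
      (ζ ^ (m : ℕ) * (ζ ^ (k : ℕ))⁻¹) ^ ((a : ℕ) + 1) := fun a => by
    rw [star_def, map_pow, hconj, mul_pow, inv_pow, inv_pow, ← pow_mul, ← pow_mul,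
      mul_comm (m : ℕ), mul_comm (k : ℕ)]
  simp only [mul_apply, conjTranspose_apply, of_apply, hentry, Matrix.smul_apply, one_apply,
    smul_eq_mul]
  by_cases hmk : m = k
  · simp [hmk, hζ0]
  · have hw : ζ ^ (m : ℕ) * (ζ ^ (k : ℕ))⁻¹ ≠ 1 := by
      rw [Ne, mul_inv_eq_one₀ (pow_ne_zero _ hζ0)]
      exact fun h => hmk (Fin.ext (hζ.pow_inj m.isLt k.isLt h))
    rw [sum_fin_pow_succ_eq_zero _ hw, if_neg hmk, mul_zero]
    rw [mul_pow, inv_pow, ← pow_mul, ← pow_mul, mul_comm _ n, mul_comm _ n, pow_mul, pow_mul,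
      hζ.pow_eq_one, one_pow, one_pow, inv_one, mul_one]

noncomputable def rootAngle (r : ℕ) (a : Fin r) : ℝ := 2 * π * ((a : ℕ) + 1) / r

theorem exp_rootAngle_mul_I (r : ℕ) (a : Fin r) :
    cexp (rootAngle r a * I) = cexp (2 * π * I / r) ^ ((a : ℕ) + 1) := by
  rw [← Complex.exp_nat_mul, rootAngle]
  push_cast
  ring_nf

theorem monotone_rootAngle (r : ℕ) : Monotone (rootAngle r) := fun a b hab => by
  unfold rootAngle
  gcongr
  exact_mod_cast hab

theorem rootAngle_sub_rootAngle_le (r : ℕ) (i j : Fin r) :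
    rootAngle r j - rootAngle r i ≤ 2 * π := by
  have hr : (0 : ℝ) < r := by exact_mod_cast i.pos
  have hj : ((j : ℕ) : ℝ) + 1 ≤ r := by exact_mod_cast j.isLt
  unfold rootAngle
  rw [← sub_div, div_le_iff₀ hr]
  nlinarith [pi_pos, (i : ℕ).cast_nonneg (α := ℝ)]

theorem sum_sum_Ioi_rootAngle (r : ℕ) (hr : r ≠ 0) :
    ∑ i : Fin r, ∑ j ∈ Ioi i, ((rootAngle r i + rootAngle r j) / 2 + π / 2) =
      ((r - 1) * (3 * r + 2) / 2 : ℕ) * (π / 2) := by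
  have hdvd : 2 ∣ (r - 1) * (3 * r + 2) := by
    rcases Nat.even_or_odd r with ⟨k, rfl⟩ | ⟨k, rfl⟩
    · exact Dvd.dvd.mul_left ⟨3 * k + 1, by ring⟩ _
    · exact Dvd.dvd.mul_right ⟨k, by omega⟩ _
  have hsplit : ∀ i j : Fin r, (rootAngle r i + rootAngle r j) / 2 + π / 2 =
      (rootAngle r i / 2 + π / 4) + (rootAngle r j / 2 + π / 4) := fun i j => by ring
  simp_rw [hsplit]
  rw [Fin.sum_sum_Ioi_add, sum_add_distrib, ← sum_div]
  simp only [rootAngle, ← sum_div, ← mul_sum, Fin.sum_natCast_add_one, sum_const, card_univ,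
    Fintype.card_fin, nsmul_eq_mul]
  have hr1 : ((r - 1 : ℕ) : ℝ) = r - 1 := Nat.cast_pred (Nat.pos_of_ne_zero hr)
  rw [Nat.cast_div hdvd two_ne_zero, Nat.cast_mul, hr1]
  field_simp
  push_cast
  ring

/-- Schur's evaluation of the Vandermonde determinant on roots of unity:
for `ζ = e^{2πi/r}` with `r ≥ 2`, the determinant of the `r × r` matrix `(ζ^{αm})`
(rows `m = 0,…,r-1`, columns `α = 1,…,r`) equals `r^{r/2} · i^{(r-1)(3r+2)/2}`,
where `r^{r/2} = (√r)^r`. -/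
theorem schur_vandermonde_roots_of_unity (r : ℕ) (hr : 2 ≤ r) :
    Matrix.det (Matrix.of fun m a : Fin r =>
        Complex.exp (2 * Real.pi * Complex.I / r) ^ ((a.val + 1) * m.val))
    = ((Real.sqrt r : ℝ) : ℂ) ^ r * Complex.I ^ ((r - 1) * (3 * r + 2) / 2) := by
  have hr0 : r ≠ 0 := by omega
  have hM : (Matrix.of fun m a : Fin r =>
      Complex.exp (2 * Real.pi * Complex.I / r) ^ ((a.val + 1) * m.val)) =
        (vandermonde fun a => cexp (rootAngle r a * I))ᵀ := by
    ext m a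
    simp [vandermonde, exp_rootAngle_mul_I, ← pow_mul]
  set P : ℝ := ∏ i, ∏ j ∈ Ioi i, 2 * Real.sin ((rootAngle r j - rootAngle r i) / 2)
  have hdet : (vandermonde fun a => cexp (rootAngle r a * I)).det =
      P * I ^ ((r - 1) * (3 * r + 2) / 2) := by
    rw [det_vandermonde_exp_mul_I, sum_sum_Ioi_rootAngle r hr0,
      Complex.exp_natCast_mul_pi_div_two_mul_I]
  have hP : P = √r ^ r := by
    have hnorm := RCLike.norm_det_of_mul_conjTranspose_eq_smul_one (Nat.cast_nonneg r)
      (Complex.isPrimitiveRoot_exp r hr0).powMatrix_mul_conjTranspose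
    rwa [Fintype.card_fin, hM, det_transpose, hdet, norm_mul, norm_pow, norm_I, one_pow, mul_one,
      norm_real, Real.norm_of_nonneg (prod_prod_Ioi_two_sin_half_sub_nonneg (monotone_rootAngle r)
        (rootAngle_sub_rootAngle_le r))] at hnorm
  rw [hM, det_transpose, hdet, hP, ofReal_pow]
end

section
/- With the notation of the previous statement, the coefficient M_{n,μ,ν} = [u_1^{μ_1}⋯u_n^{μ_n}] m_ν h_{|μ|−|ν|} is given by the explicit product formula M_{n,μ,ν} = (1/z_ν) ∏_{k=0}^{ν_1} ( n − ∑_{i=0}^{k−1} p_i(μ) − ∑_{j=k+1}^{ν_1} p_j(ν) )^{\underline{p_k(ν)}}, where x^{\underline{m}} = x(x−1)⋯(x−m+1) denotes the falling factorial. In particular, M_{n,μ,ν} is a polynomial in n and the multiplicities p_0(μ),...,p_{ν_1−1}(μ). -/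
/-!
The coefficient of `x^μ` in `x^α · h_d` is `1` when `α ≤ μ` and `|μ| - |α| = d`, and `0`
otherwise; hence `z_ν · M_{n,μ,ν}` is the number of permutations `τ` with `ν (τ i) ≤ μ i`
for all `i`. Such a `τ` is the same as an injective choice, for every position `j` of `ν`, of a
position `i = τ⁻¹ j` with `ν j ≤ μ i`. Since `ν` is antitone these admissible sets grow with `j`,
so choosing along `j = 0, 1, …` leaves `#{i | ν j ≤ μ i} - j` options at step `j`. The positions
`j` with `ν j = k` form an interval of length `p_k(ν)` starting at `#{i | k < ν i}`, and
`#{i | k ≤ μ i} = n - ∑_{i<k} p_i(μ)`: collecting the factors along these intervals gives the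
falling factorials.
-/

open Finset MvPolynomial

namespace MvPolynomial

variable {σ R : Type*} [CommSemiring R] [Fintype σ]

theorem prod_X_pow_eq_monomial_equivFunOnFinite (e : σ → ℕ) :
    ∏ i, (X i : MvPolynomial σ R) ^ e i = monomial (Finsupp.equivFunOnFinite.symm e) 1 := by
  rw [prod_X_pow]
  congr
  ext
  exact Finsupp.indicator_of_mem (mem_univ _) _

theorem coeff_sum_prod_X_pow_sum_eq [DecidableEq σ] (d : ℕ) (e : σ →₀ ℕ) :
    coeff e (∑ k ∈ filter (fun k => ∑ i, k i = d) (Fintype.piFinset fun _ : σ => range (d + 1)),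
      ∏ i, (X i : MvPolynomial σ R) ^ k i) = if ∑ i, e i = d then 1 else 0 := by
  simp_rw [prod_X_pow_eq_monomial_equivFunOnFinite, coeff_sum, coeff_monomial,
    Equiv.symm_apply_eq, sum_ite_eq', mem_filter]
  refine if_congr ⟨And.right, fun hd => ⟨?_, hd⟩⟩ rfl rfl
  simp only [Fintype.mem_piFinset, mem_range, Finsupp.equivFunOnFinite_apply, Nat.lt_succ_iff]
  exact fun i => hd ▸ single_le_sum (fun _ _ => Nat.zero_le _) (mem_univ i)

theorem coeff_sum_perm_mul_sum_prod_X_pow [DecidableEq σ] (μ ν : σ → ℕ) :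
    coeff (Finsupp.equivFunOnFinite.symm μ)
      ((∑ τ : Equiv.Perm σ, ∏ i, (X i : MvPolynomial σ R) ^ ν (τ i)) *
        ∑ k ∈ filter (fun k => ∑ i, k i = ∑ i, μ i - ∑ i, ν i)
            (Fintype.piFinset fun _ : σ => range (∑ i, μ i - ∑ i, ν i + 1)),
          ∏ i, (X i : MvPolynomial σ R) ^ k i)
      = #{τ : Equiv.Perm σ | ∀ i, ν (τ i) ≤ μ i} := by
  rw [sum_mul, coeff_sum, card_filter, Nat.cast_sum]
  refine sum_congr rfl fun τ _ => ?_
  rw [prod_X_pow_eq_monomial_equivFunOnFinite, coeff_monomial_mul', one_mul,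
    coeff_sum_prod_X_pow_sum_eq]
  simp only [Finsupp.le_def, Finsupp.coe_tsub, Pi.sub_apply, Finsupp.coe_equivFunOnFinite_symm]
  by_cases hle : ∀ i, ν (τ i) ≤ μ i
  · have hd : ∑ i, (μ i - ν (τ i)) = ∑ i, μ i - ∑ i, ν i := by
      rw [sum_tsub_distrib _ fun i _ => hle i, Equiv.sum_comp τ ν]
    simp [hle, hd]
  · simp [hle]

end MvPolynomial

section

variable {α : Type*} [Fintype α] [DecidableEq α]

theorem card_filter_injective_forall_mem_apply_zero_eq {n : ℕ} (S : Fin (n + 1) → Finset α)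
    {a : α} (ha : a ∈ S 0) :
    #{f ∈ ({f : Fin (n + 1) → α | Function.Injective f ∧ ∀ i, f i ∈ S i} : Finset _) | f 0 = a}
      = #{g : Fin n → α | Function.Injective g ∧ ∀ i, g i ∈ (S i.succ).erase a} := by
  refine card_nbij' Fin.tail (fun g => Fin.cons a g) ?_ ?_ ?_ ?_
  · intro f hf
    simp only [coe_filter, mem_filter, mem_univ, true_and, Set.mem_ofPred_eq] at hf ⊢
    obtain ⟨⟨hinj, hmem⟩, rfl⟩ := hf
    refine ⟨hinj.comp (Fin.succ_injective n), fun i => mem_erase.mpr ⟨?_, hmem i.succ⟩⟩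
    exact fun h => Fin.succ_ne_zero i (hinj h)
  · intro g hg
    simp only [coe_filter, mem_filter, mem_univ, true_and, Set.mem_ofPred_eq] at hg ⊢
    obtain ⟨hinj, hmem⟩ := hg
    refine ⟨⟨Fin.cons_injective_iff.mpr ⟨fun ⟨i, hi⟩ => (mem_erase.mp (hmem i)).1 hi, hinj⟩,
      Fin.cases ha fun i => mem_of_mem_erase (hmem i)⟩, rfl⟩
  · intro f hf
    simp only [coe_filter, mem_filter, Set.mem_ofPred_eq] at hf
    rw [← hf.2]
    exact Fin.cons_self_tail f
  · intro g _
    simp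

-- Over a ring the factors `#(S i) - i` are not truncated; the identity still holds when some of
-- them are negative, because then one of them is `0`.
theorem card_filter_injective_forall_mem_of_monotone {R : Type*} [CommRing R] :
    ∀ {n : ℕ} (S : Fin n → Finset α), Monotone S →
      (#{f : Fin n → α | Function.Injective f ∧ ∀ i, f i ∈ S i} : R) = ∏ i, ((#(S i) : R) - i)
  | 0, S, _ => by simp [Function.injective_of_subsingleton]
  | n + 1, S, hS => by
    have hfiber (a : α) (ha : a ∈ S 0) :
        (#{f ∈ ({f | Function.Injective f ∧ ∀ i, f i ∈ S i} : Finset (Fin (n + 1) → α)) |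
            f 0 = a} : R)
          = ∏ i : Fin n, ((#(S i.succ) : R) - (i.succ : ℕ)) := by
      have haS (i : Fin (n + 1)) : a ∈ S i := hS (Fin.zero_le i) ha
      rw [card_filter_injective_forall_mem_apply_zero_eq S ha,
        card_filter_injective_forall_mem_of_monotone _ fun i j hij =>
          erase_subset_erase a (hS (Fin.succ_le_succ_iff.mpr hij))]
      refine prod_congr rfl fun i _ => ?_
      rw [card_erase_of_mem (haS _), Nat.cast_sub (card_pos.mpr ⟨a, haS _⟩), Fin.val_succ]
      push_cast
      ring
    rw [card_eq_sum_card_fiberwise fun f hf => (mem_filter.mp hf).2.2 0, Nat.cast_sum,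
      sum_congr rfl hfiber, sum_const, nsmul_eq_mul, Fin.prod_univ_succ]
    simp

end

theorem card_filter_perm_forall_le_of_antitone {R : Type*} [CommRing R] {n : ℕ} (μ : Fin n → ℕ)
    {ν : Fin n → ℕ} (hν : Antitone ν) :
    (#{τ : Equiv.Perm (Fin n) | ∀ i, ν (τ i) ≤ μ i} : R)
      = ∏ j, ((#{i | ν j ≤ μ i} : R) - j) := by
  have hcard : #{τ : Equiv.Perm (Fin n) | ∀ i, ν (τ i) ≤ μ i}
      = #{f : Fin n → Fin n | Function.Injective f ∧ ∀ j, f j ∈ ({i | ν j ≤ μ i} : Finset _)} := by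
    refine card_bij (fun τ _ => ⇑τ⁻¹) (fun τ hτ => ?_) (fun τ _ τ' _ h => ?_) (fun f hf => ?_)
    · simp only [mem_filter, mem_univ, true_and] at hτ ⊢
      exact ⟨τ⁻¹.injective, fun j => by simpa using hτ (τ⁻¹ j)⟩
    · exact inv_injective (DFunLike.coe_injective h)
    · simp only [mem_filter, mem_univ, true_and] at hf
      obtain ⟨hinj, hmem⟩ := hf
      let e := Equiv.ofBijective f (Finite.injective_iff_bijective.mp hinj)
      refine ⟨e⁻¹, mem_filter.mpr ⟨mem_univ _, fun i => ?_⟩, rfl⟩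
      have hi := hmem (e.symm i)
      rwa [show f (e.symm i) = i from e.apply_symm_apply i] at hi
  rw [hcard, card_filter_injective_forall_mem_of_monotone]
  intro j j' hjj' i
  simp only [mem_filter, mem_univ, true_and]
  exact (hν hjj').trans

theorem val_lt_card_filter_le_iff {n : ℕ} {ν : Fin n → ℕ} (hν : Antitone ν) (k : ℕ) (j : Fin n) :
    (j : ℕ) < #{i | k ≤ ν i} ↔ k ≤ ν j := by
  constructor
  · intro hj
    by_contra! hlt
    have hsub : ({i | k ≤ ν i} : Finset (Fin n)) ⊆ Iio j := by
      intro i hi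
      simp only [mem_filter, mem_univ, true_and] at hi
      exact mem_Iio.mpr (lt_of_not_ge fun hji => (hlt.trans_le' (hi.trans (hν hji))).false)
    simpa using (card_le_card hsub).trans_lt' hj
  · intro hk
    have hsub : Iic j ⊆ ({i | k ≤ ν i} : Finset (Fin n)) := fun i hi =>
      mem_filter.mpr ⟨mem_univ i, hk.trans (hν (mem_Iic.mp hi))⟩
    simpa using card_le_card hsub

theorem map_valEmbedding_filter_eq_Ico {n : ℕ} {ν : Fin n → ℕ} (hν : Antitone ν) (k : ℕ) :
    ({j | ν j = k} : Finset (Fin n)).map Fin.valEmbedding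
      = Ico #{i | k + 1 ≤ ν i} #{i | k ≤ ν i} := by
  ext m
  simp only [mem_map, mem_filter, mem_univ, true_and, Fin.valEmbedding_apply, mem_Ico]
  constructor
  · rintro ⟨j, rfl, rfl⟩
    rw [val_lt_card_filter_le_iff hν, ← not_lt, val_lt_card_filter_le_iff hν]
    omega
  · rintro ⟨h1, h2⟩
    have hm : m < n := h2.trans_le ((card_filter_le _ _).trans_eq (card_fin n))
    refine ⟨⟨m, hm⟩, ?_, rfl⟩
    rw [← Fin.val_mk hm, val_lt_card_filter_le_iff hν] at h2
    rw [← Fin.val_mk hm, ← not_lt, val_lt_card_filter_le_iff hν] at h1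
    omega

theorem prod_sub_val_eq_prod_range_prod_range {R : Type*} [CommRing R] {n : ℕ} {ν : Fin n → ℕ}
    (hν : Antitone ν) (a : ℕ → R) {M : ℕ} (hM : ∀ j, ν j ≤ M) :
    ∏ j, (a (ν j) - j)
      = ∏ k ∈ range (M + 1), ∏ t ∈ range #{j | ν j = k}, (a k - #{i | k + 1 ≤ ν i} - t) := by
  rw [← prod_fiberwise_of_maps_to (g := ν) fun j _ => mem_range.mpr (Nat.lt_succ_of_le (hM j))]
  refine prod_congr rfl fun k _ => ?_
  have hcard : #{j | ν j = k} = #{i | k ≤ ν i} - #{i | k + 1 ≤ ν i} := by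
    rw [← card_map Fin.valEmbedding, map_valEmbedding_filter_eq_Ico hν, Nat.card_Ico]
  calc ∏ j ∈ {j | ν j = k}, (a (ν j) - j)
      = ∏ j ∈ {j | ν j = k}, (a k - ((Fin.valEmbedding j : ℕ) : R)) :=
        prod_congr rfl fun j hj => by rw [(mem_filter.mp hj).2]; rfl
    _ = ∏ m ∈ Ico #{i | k + 1 ≤ ν i} #{i | k ≤ ν i}, (a k - m) := by
        rw [← map_valEmbedding_filter_eq_Ico hν, prod_map]
    _ = _ := by
        rw [prod_Ico_eq_prod_range, hcard]
        refine prod_congr rfl fun t _ => ?_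
        push_cast
        ring

theorem sum_range_card_filter_eq_add_card_filter_le {ι : Type*} [Fintype ι] (f : ι → ℕ) (k : ℕ) :
    ∑ m ∈ range k, #{i | f i = m} + #{i | k ≤ f i} = Fintype.card ι := by
  rw [sum_card_fiberwise_eq_card_filter]
  simp only [mem_range, ← not_lt]
  exact (card_filter_add_card_filter_not _).trans card_univ

theorem sum_Icc_card_filter_eq {ι : Type*} [Fintype ι] {f : ι → ℕ} {M : ℕ} (hM : ∀ i, f i ≤ M)
    (k : ℕ) : ∑ m ∈ Icc k M, #{i | f i = m} = #{i | k ≤ f i} := by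
  rw [sum_card_fiberwise_eq_card_filter]
  congr 1
  exact filter_congr fun i _ => by simp [hM i]

theorem coeff_monomial_mul_complete_product_formula_general
    (n : ℕ) (hn : 1 ≤ n) (μ ν : Fin n → ℕ)
    (hν : Antitone ν) :
    MvPolynomial.coeff (Finsupp.equivFunOnFinite.symm μ)
      (MvPolynomial.C
          (((∏ k ∈ Finset.range (ν ⟨0, hn⟩ + 1),
              Nat.factorial ((Finset.univ.filter fun i => ν i = k).card) : ℕ) : ℚ))⁻¹ *
        (∑ σ : Equiv.Perm (Fin n), ∏ i : Fin n,
            (MvPolynomial.X i : MvPolynomial (Fin n) ℚ) ^ ν (σ i)) *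
        ∑ k ∈ Finset.filter (fun k => ∑ i, k i = ∑ i, μ i - ∑ i, ν i)
            (Fintype.piFinset fun _ : Fin n => Finset.range (∑ i, μ i - ∑ i, ν i + 1)),
          ∏ i : Fin n, (MvPolynomial.X i : MvPolynomial (Fin n) ℚ) ^ k i)
    = (((∏ k ∈ Finset.range (ν ⟨0, hn⟩ + 1),
          Nat.factorial ((Finset.univ.filter fun i => ν i = k).card) : ℕ) : ℚ))⁻¹ *
      ∏ k ∈ Finset.range (ν ⟨0, hn⟩ + 1),
        ∏ t ∈ Finset.range ((Finset.univ.filter fun i => ν i = k).card),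
          ((n : ℚ)
            - ∑ i ∈ Finset.range k, ((Finset.univ.filter fun j => μ j = i).card : ℚ)
            - ∑ j ∈ Finset.Icc (k + 1) (ν ⟨0, hn⟩),
                ((Finset.univ.filter fun i => ν i = j).card : ℚ)
            - (t : ℚ)) := by
  have hM : ∀ j, ν j ≤ ν ⟨0, hn⟩ := fun j => hν (show (⟨0, hn⟩ : Fin n) ≤ j from Nat.zero_le _)
  have hμk : ∀ k, (n : ℚ) - ∑ i ∈ range k, (#{j | μ j = i} : ℚ) = #{i | k ≤ μ i} := fun k => by
    rw [sub_eq_iff_eq_add', ← Nat.cast_sum]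
    exact_mod_cast
      ((sum_range_card_filter_eq_add_card_filter_le μ k).trans (Fintype.card_fin n)).symm
  have hνk : ∀ k, ∑ j ∈ Icc (k + 1) (ν ⟨0, hn⟩), (#{i | ν i = j} : ℚ) = #{i | k + 1 ≤ ν i} :=
    fun k => by exact_mod_cast sum_Icc_card_filter_eq hM (k + 1)
  -- `filter_congr_decidable` trades the `Fintype` instance deciding `∀ i : Fin n` in the generic
  -- coefficient lemma for `Nat.decidableForallFin`, the one the counting lemma was stated with.
  rw [mul_assoc, coeff_C_mul, coeff_sum_perm_mul_sum_prod_X_pow, filter_congr_decidable,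
    card_filter_perm_forall_le_of_antitone μ hν,
    prod_sub_val_eq_prod_range_prod_range hν (fun k => (#{i | k ≤ μ i} : ℚ)) hM]
  simp only [hμk, hνk]

/-- Explicit product formula (Proposition B.1): the coefficient
`M_{n,μ,ν} = [u₁^{μ₁}⋯uₙ^{μₙ}] m_ν h_{|μ|-|ν|}` is given by
`(1/z_ν) ∏_{k=0}^{ν₁} ( n - ∑_{i<k} p_i(μ) - ∑_{j=k+1}^{ν₁} p_j(ν) )^{\underline{p_k(ν)}}`,
where `x^{\underline m} = x(x-1)⋯(x-m+1)` is the falling factorial (written as a product),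
`p_k(λ)` is the multiplicity of the part `k` in `λ` and `z_ν = ∏ₖ p_k(ν)!`.
In particular `M_{n,μ,ν}` is a polynomial in `n` and `p₀(μ),…,p_{ν₁-1}(μ)`. -/
theorem coeff_monomial_mul_complete_product_formula
    (n : ℕ) (hn : 1 ≤ n) (μ ν : Fin n → ℕ)
    (hμ : Antitone μ) (hν : Antitone ν) (hw : ∑ i, ν i ≤ ∑ i, μ i) :
    MvPolynomial.coeff (Finsupp.equivFunOnFinite.symm μ)
      (MvPolynomial.C
          (((∏ k ∈ Finset.range (ν ⟨0, hn⟩ + 1),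
              Nat.factorial ((Finset.univ.filter fun i => ν i = k).card) : ℕ) : ℚ))⁻¹ *
        (∑ σ : Equiv.Perm (Fin n), ∏ i : Fin n,
            (MvPolynomial.X i : MvPolynomial (Fin n) ℚ) ^ ν (σ i)) *
        ∑ k ∈ Finset.filter (fun k => ∑ i, k i = ∑ i, μ i - ∑ i, ν i)
            (Fintype.piFinset fun _ : Fin n => Finset.range (∑ i, μ i - ∑ i, ν i + 1)),
          ∏ i : Fin n, (MvPolynomial.X i : MvPolynomial (Fin n) ℚ) ^ k i)
    = (((∏ k ∈ Finset.range (ν ⟨0, hn⟩ + 1),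
          Nat.factorial ((Finset.univ.filter fun i => ν i = k).card) : ℕ) : ℚ))⁻¹ *
      ∏ k ∈ Finset.range (ν ⟨0, hn⟩ + 1),
        ∏ t ∈ Finset.range ((Finset.univ.filter fun i => ν i = k).card),
          ((n : ℚ)
            - ∑ i ∈ Finset.range k, ((Finset.univ.filter fun j => μ j = i).card : ℚ)
            - ∑ j ∈ Finset.Icc (k + 1) (ν ⟨0, hn⟩),
                ((Finset.univ.filter fun i => ν i = j).card : ℚ)
            - (t : ℚ)) :=
  coeff_monomial_mul_complete_product_formula_general n hn μ ν hν
end
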